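/- arXiv:2208.07561 — 4 statements merged into one kernel-verified Lean document; each statement's English description precedes it below -/
import Mathlib

section
/- For every 0 < ϑ < 1, η > 0 and all real t, the Fourier transform of the two-sided Gamma density satisfies the lower bound |f̃_{ϑ,η}(t)| ≥ min(1, η^{-ϑ}) · cos(πϑ/2) · (1 + |t|)^{-ϑ}, and the constant min(1, η^{-ϑ}) cos(πϑ/2) is strictly positive. -/
/-- for `0 < ϑ < 1` and `η > 0`, the Fourier transform
`f̃_{ϑ,η}(t) = (1 + t²η²)^{-ϑ/2} cos(ϑ arctan(tη))` of the two-sided Gamma density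
satisfies the lower bound `|f̃_{ϑ,η}(t)| ≥ min(1, η^{-ϑ}) cos(πϑ/2) (1 + |t|)^{-ϑ}`,
and this constant is strictly positive. -/
theorem fourier_twoSidedGamma_lower_bound (ϑ η : ℝ) (h0 : 0 < ϑ) (h1 : ϑ < 1)
    (hη : 0 < η) (ft : ℝ → ℝ)
    (hft : ∀ t : ℝ, ft t =
      (1 + t ^ 2 * η ^ 2) ^ (-(ϑ / 2)) * Real.cos (ϑ * Real.arctan (t * η))) :
    (∀ t : ℝ,
      min 1 (η ^ (-ϑ)) * Real.cos (Real.pi * ϑ / 2) * (1 + |t|) ^ (-ϑ) ≤ |ft t|) ∧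
    0 < min 1 (η ^ (-ϑ)) * Real.cos (Real.pi * ϑ / 2) := by
  have hπ := Real.pi_pos
  have hπϑ2 : Real.pi * ϑ / 2 < Real.pi / 2 := by nlinarith
  have hcosC : 0 < Real.cos (Real.pi * ϑ / 2) :=
    Real.cos_pos_of_mem_Ioo ⟨by nlinarith, hπϑ2⟩
  have hmin : 0 < min 1 (η ^ (-ϑ)) := lt_min one_pos (Real.rpow_pos_of_pos hη _)
  refine ⟨fun t => ?_, by positivity⟩
  set M := max 1 η with hM
  have hM1 : (1:ℝ) ≤ M := le_max_left _ _
  have hMη : η ≤ M := le_max_right _ _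
  have hminM : min 1 (η ^ (-ϑ)) = M ^ (-ϑ) := by
    rcases le_total η 1 with h | h
    · rw [hM, max_eq_left h, Real.one_rpow,
        min_eq_left (Real.one_le_rpow_of_pos_of_le_one_of_nonpos hη h (by linarith))]
    · rw [hM, max_eq_right h,
        min_eq_right (Real.rpow_le_one_of_one_le_of_nonpos h (by linarith))]
  -- cosine bound
  have harc1 := Real.arctan_lt_pi_div_two (t * η)
  have harc2 := Real.neg_pi_div_two_lt_arctan (t * η)
  have ha : |ϑ * Real.arctan (t * η)| ≤ Real.pi * ϑ / 2 := by
    rw [abs_mul, abs_of_pos h0]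
    rcases abs_le.mpr ⟨harc2.le, harc1.le⟩ with h'
    calc ϑ * |Real.arctan (t * η)| ≤ ϑ * (Real.pi / 2) :=
          mul_le_mul_of_nonneg_left h' h0.le
      _ = Real.pi * ϑ / 2 := by ring
  have hcos : Real.cos (Real.pi * ϑ / 2) ≤ Real.cos (ϑ * Real.arctan (t * η)) := by
    rw [← Real.cos_abs (ϑ * Real.arctan (t * η))]
    exact Real.cos_le_cos_of_nonneg_of_le_pi (abs_nonneg _) (by nlinarith) ha
  -- power bound
  have hbase : (0:ℝ) < 1 + t ^ 2 * η ^ 2 := by positivity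
  have hsq : Real.sqrt (1 + t ^ 2 * η ^ 2) ≤ M * (1 + |t|) := by
    rw [show M * (1 + |t|) = Real.sqrt ((M * (1 + |t|)) ^ 2) from
      (Real.sqrt_sq (by positivity)).symm]
    apply Real.sqrt_le_sqrt
    have hM2 : (1:ℝ) ≤ M ^ 2 := one_le_pow₀ hM1
    have hη2 : η ^ 2 ≤ M ^ 2 := pow_le_pow_left₀ hη.le hMη 2
    nlinarith [abs_nonneg t, sq_abs t]
  have hexp : (1 + t ^ 2 * η ^ 2) ^ (-(ϑ / 2)) =
      Real.sqrt (1 + t ^ 2 * η ^ 2) ^ (-ϑ) := by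
    rw [Real.sqrt_eq_rpow, ← Real.rpow_mul hbase.le]
    congr 1; ring
  have hpow : (M * (1 + |t|)) ^ (-ϑ) ≤ (1 + t ^ 2 * η ^ 2) ^ (-(ϑ / 2)) := by
    rw [hexp]
    exact Real.rpow_le_rpow_of_nonpos (Real.sqrt_pos.mpr hbase) hsq (by linarith)
  have hmulr : min 1 (η ^ (-ϑ)) * (1 + |t|) ^ (-ϑ) = (M * (1 + |t|)) ^ (-ϑ) := by
    rw [hminM, ← Real.mul_rpow (by linarith) (by positivity)]
  have key : min 1 (η ^ (-ϑ)) * Real.cos (Real.pi * ϑ / 2) * (1 + |t|) ^ (-ϑ) ≤ ft t := by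
    rw [hft t]
    calc min 1 (η ^ (-ϑ)) * Real.cos (Real.pi * ϑ / 2) * (1 + |t|) ^ (-ϑ)
        = (M * (1 + |t|)) ^ (-ϑ) * Real.cos (Real.pi * ϑ / 2) := by
          rw [← hmulr]; ring
      _ ≤ (1 + t ^ 2 * η ^ 2) ^ (-(ϑ / 2)) * Real.cos (ϑ * Real.arctan (t * η)) := by
          apply mul_le_mul hpow hcos hcosC.le (by positivity)
  exact key.trans (le_abs_self _)
end

section
/- (Lemma 1, failure for ϑ > 1.) For every ϑ > 1 and η > 0, the Fourier transform of the two-sided Gamma density vanishes at t₀ = tan(π/(2ϑ))/η, i.e., f̃_{ϑ,η}(t₀) = 0. Consequently, for no choice of constants c₂ > c₁ > 0 and exponent ϑ̃ > 0 does the bound c₁(1+|t|)^{-ϑ̃} ≤ |f̃_{ϑ,η}(t)| ≤ c₂(1+|t|)^{-ϑ̃} hold for all t ∈ ℝ. -/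
/-- Lemma 1, failure for `ϑ > 1`: the Fourier transform
`f̃_{ϑ,η}(t) = (1 + t²η²)^{-ϑ/2} cos(ϑ arctan(tη))` of the two-sided Gamma density with
shape `ϑ > 1` vanishes at `t₀ = tan(π/(2ϑ))/η`; consequently no constants
`0 < c₁ < c₂` and exponent `ϑ̃ > 0` can satisfy
`c₁(1+|t|)^{-ϑ̃} ≤ |f̃_{ϑ,η}(t)| ≤ c₂(1+|t|)^{-ϑ̃}` for all real `t`. -/
theorem twoSidedGamma_not_ordinary_smooth (ϑ η : ℝ) (h1 : 1 < ϑ) (hη : 0 < η)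
    (ft : ℝ → ℝ)
    (hft : ∀ t : ℝ, ft t =
      (1 + t ^ 2 * η ^ 2) ^ (-(ϑ / 2)) * Real.cos (ϑ * Real.arctan (t * η))) :
    ft (Real.tan (Real.pi / (2 * ϑ)) / η) = 0 ∧
    ¬ ∃ c₁ c₂ ϑt : ℝ, 0 < c₁ ∧ c₁ < c₂ ∧ 0 < ϑt ∧
      ∀ t : ℝ, c₁ * (1 + |t|) ^ (-ϑt) ≤ |ft t| ∧ |ft t| ≤ c₂ * (1 + |t|) ^ (-ϑt) := by
  have hϑ0 : 0 < ϑ := lt_trans one_pos h1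
  set t₀ := Real.tan (Real.pi / (2 * ϑ)) / η with ht₀
  have hrange : Real.pi / (2 * ϑ) ∈ Set.Ioo (-(Real.pi / 2)) (Real.pi / 2) := by
    constructor
    · have : 0 < Real.pi / (2 * ϑ) := by positivity
      linarith [Real.pi_pos]
    · rw [div_lt_div_iff₀ (by positivity) two_pos]
      nlinarith [Real.pi_pos]
  have harctan : Real.arctan (t₀ * η) = Real.pi / (2 * ϑ) := by
    rw [ht₀, div_mul_cancel₀ _ (ne_of_gt hη)]
    exact Real.arctan_tan hrange.1 hrange.2
  have hzero : ft t₀ = 0 := by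
    rw [hft, harctan, mul_div_assoc', mul_comm ϑ Real.pi,
      mul_div_mul_right _ _ (ne_of_gt hϑ0), Real.cos_pi_div_two, mul_zero]
  refine ⟨hzero, ?_⟩
  rintro ⟨c₁, c₂, ϑt, hc₁, _, _, h⟩
  have := (h t₀).1
  rw [hzero, abs_zero] at this
  have hpos : 0 < c₁ * (1 + |t₀|) ^ (-ϑt) := by positivity
  linarith
end

section
/- (Supremum of the conditional coverage probability in the normal-normal case.) Let σ_X, σ_Y > 0 and ε > 0, and let M_{z,ε} = Φ((σ_X ε - zσ_Y²/(σ_X² + σ_Y²))√(1/σ_X² + 1/σ_Y²)) - Φ((-σ_X ε - zσ_Y²/(σ_X² + σ_Y²))√(1/σ_X² + 1/σ_Y²)). Then the function z ↦ M_{z,ε} attains its supremum over ℝ uniquely at z = 0, and sup_{z ∈ ℝ} M_{z,ε} = 2Φ(√(1 + σ_X²/σ_Y²) · ε) - 1. -/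
open MeasureTheory

/-- The standard normal cumulative distribution function `Φ`. -/
noncomputable def stdNormalCDF (z : ℝ) : ℝ :=
  ∫ x in Set.Iic z, Real.exp (-x ^ 2 / 2) / Real.sqrt (2 * Real.pi)

noncomputable def phi (x : ℝ) : ℝ := Real.exp (-x ^ 2 / 2) / Real.sqrt (2 * Real.pi)

lemma phi_eq (x : ℝ) : phi x = Real.exp (-(1/2) * x ^ 2) / Real.sqrt (2 * Real.pi) := by
  unfold phi; ring_nf

lemma phi_integrable : Integrable phi := by
  have h := (integrable_exp_neg_mul_sq (by norm_num : (0:ℝ) < 1/2)).div_const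
    (Real.sqrt (2 * Real.pi))
  have : phi = fun x => Real.exp (-(1/2) * x ^ 2) / Real.sqrt (2 * Real.pi) := by
    funext x; exact phi_eq x
  rw [this]; exact h

lemma phi_total : ∫ x : ℝ, phi x = 1 := by
  simp_rw [phi_eq, div_eq_mul_inv]
  rw [integral_mul_const, integral_gaussian]
  rw [show Real.pi / (1 * 2⁻¹ : ℝ) = 2 * Real.pi by ring, mul_inv_cancel₀ (by positivity)]

lemma phi_pos (x : ℝ) : 0 < phi x := by unfold phi; positivity

lemma phi_even (x : ℝ) : phi (-x) = phi x := by unfold phi; ring_nf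

lemma phi_lt_phi {x y : ℝ} (h : |y| < |x|) : phi x < phi y := by
  unfold phi
  rw [div_lt_div_iff_of_pos_right (by positivity)]
  apply Real.exp_lt_exp.mpr
  have : y ^ 2 < x ^ 2 :=
    calc y ^ 2 = |y| ^ 2 := (sq_abs y).symm
      _ < |x| ^ 2 := by exact pow_lt_pow_left₀ h (abs_nonneg _) two_ne_zero
      _ = x ^ 2 := sq_abs x
  linarith

lemma stdNormalCDF_eq (z : ℝ) : stdNormalCDF z = ∫ x in Set.Iic z, phi x := rfl

lemma Phi_sub (a b : ℝ) : stdNormalCDF b - stdNormalCDF a = ∫ x in a..b, phi x := by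
  rw [stdNormalCDF_eq, stdNormalCDF_eq]
  exact intervalIntegral.integral_Iic_sub_Iic phi_integrable.integrableOn
    phi_integrable.integrableOn

lemma Phi_neg (a : ℝ) : stdNormalCDF (-a) = 1 - stdNormalCDF a := by
  have h1 : stdNormalCDF (-a) = ∫ x in Set.Ioi a, phi x := by
    rw [stdNormalCDF_eq]
    have : (∫ x in Set.Iic (-a), phi x) = ∫ x in Set.Iic (-a), phi (-x) := by
      simp_rw [phi_even]
    rw [this, integral_comp_neg_Iic, neg_neg]
  have h2 := intervalIntegral.integral_Iic_add_Ioi (μ := volume) (b := a)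
    phi_integrable.integrableOn phi_integrable.integrableOn
  rw [phi_total] at h2
  rw [h1, stdNormalCDF_eq a]
  linarith

lemma key_pos (a t : ℝ) (ha : 0 < a) (ht : 0 < t) :
    (∫ x in (t-a)..(t+a), phi x) < ∫ x in (-a)..a, phi x := by
  have hii : ∀ u v : ℝ, IntervalIntegrable phi volume u v := fun u v =>
    phi_integrable.intervalIntegrable
  have h1 := intervalIntegral.integral_add_adjacent_intervals (μ := volume)
    (hii (t-a) (-a)) (hii (-a) (t+a))
  have h2 := intervalIntegral.integral_add_adjacent_intervals (μ := volume)
    (hii (-a) a) (hii a (t+a))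
  have hshift : (∫ x in (-a)..(t-a), phi x) = ∫ x in a..(t+a), phi (x - 2*a) := by
    rw [intervalIntegral.integral_comp_sub_right (fun x => phi x) (2*a)]
    ring_nf
  have hflip : (∫ x in (t-a)..(-a), phi x) = - ∫ x in (-a)..(t-a), phi x :=
    intervalIntegral.integral_symm _ _
  have hpos : 0 < ∫ x in a..(t+a), (phi (x - 2*a) - phi x) := by
    apply intervalIntegral.intervalIntegral_pos_of_pos_on
    · exact ((phi_integrable.comp_sub_right (2*a)).sub phi_integrable).intervalIntegrable
    · intro x hx
      have hx1 : a < x := hx.1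
      have : phi x < phi (x - 2*a) := by
        apply phi_lt_phi
        rw [abs_of_pos (lt_trans ha hx1)]
        rw [abs_lt]
        constructor <;> [linarith; linarith]
      linarith
    · linarith
  rw [intervalIntegral.integral_sub ((phi_integrable.comp_sub_right (2*a)).intervalIntegrable)
    (hii _ _)] at hpos
  rw [← hshift] at hpos
  linarith

lemma key (a t : ℝ) (ha : 0 < a) (ht : t ≠ 0) :
    stdNormalCDF (t + a) - stdNormalCDF (t - a) < stdNormalCDF a - stdNormalCDF (-a) := by
  have base : ∀ u : ℝ, 0 < u →
      stdNormalCDF (u + a) - stdNormalCDF (u - a) < stdNormalCDF a - stdNormalCDF (-a) := by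
    intro u hu
    have h1 := Phi_sub (u - a) (u + a)
    have h2 := Phi_sub (-a) a
    rw [h1, h2]
    exact key_pos a u ha hu
  rcases lt_or_gt_of_ne ht with h | h
  · have hsym : stdNormalCDF (t + a) - stdNormalCDF (t - a)
        = stdNormalCDF (-t + a) - stdNormalCDF (-t - a) := by
      have e1 : stdNormalCDF (t + a) = 1 - stdNormalCDF (-t - a) := by
        rw [show t + a = -(-t - a) by ring, Phi_neg]
      have e2 : stdNormalCDF (t - a) = 1 - stdNormalCDF (-t + a) := by
        rw [show t - a = -(-t + a) by ring, Phi_neg]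
      rw [e1, e2]; ring
    rw [hsym]
    exact base (-t) (by linarith)
  · exact base t h

/-- supremum of the conditional coverage probability, normal-normal
case: the closed-form coverage probability `z ↦ M_{z,ε}` attains its supremum over ℝ
uniquely at `z = 0`, and the supremum equals `2Φ(√(1 + σ_X²/σ_Y²)·ε) - 1`. -/
theorem normal_normal_coverage_sup (σX σY ε : ℝ) (hσX : 0 < σX) (hσY : 0 < σY)
    (hε : 0 < ε) (M : ℝ → ℝ)
    (hM : ∀ z, M z =
      stdNormalCDF ((σX * ε - z * σY ^ 2 / (σX ^ 2 + σY ^ 2)) *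
          Real.sqrt (1 / σX ^ 2 + 1 / σY ^ 2)) -
      stdNormalCDF ((-(σX * ε) - z * σY ^ 2 / (σX ^ 2 + σY ^ 2)) *
          Real.sqrt (1 / σX ^ 2 + 1 / σY ^ 2))) :
    (∀ z : ℝ, z ≠ 0 → M z < M 0) ∧
    (⨆ z : ℝ, M z) = 2 * stdNormalCDF (Real.sqrt (1 + σX ^ 2 / σY ^ 2) * ε) - 1 := by
  set s := Real.sqrt (1 / σX ^ 2 + 1 / σY ^ 2) with hs_def
  have hs : 0 < s := Real.sqrt_pos.mpr (by positivity)
  set a := σX * ε * s with ha_def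
  have ha : 0 < a := by positivity
  have hM0 : M 0 = stdNormalCDF a - stdNormalCDF (-a) := by
    rw [hM 0]
    congr 1
    · congr 1; ring
    · congr 1; ring
  have hMz : ∀ z : ℝ, M z = stdNormalCDF ((-(z * σY ^ 2 / (σX ^ 2 + σY ^ 2)) * s) + a)
      - stdNormalCDF ((-(z * σY ^ 2 / (σX ^ 2 + σY ^ 2)) * s) - a) := by
    intro z
    rw [hM z]
    congr 1
    · congr 1; ring
    · congr 1; ring
  have hlt : ∀ z : ℝ, z ≠ 0 → M z < M 0 := by
    intro z hz
    rw [hMz z, hM0]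
    apply key a _ ha
    have hden : (0:ℝ) < σX ^ 2 + σY ^ 2 := by positivity
    have : z * σY ^ 2 / (σX ^ 2 + σY ^ 2) ≠ 0 := by
      apply div_ne_zero _ (ne_of_gt hden)
      exact mul_ne_zero hz (by positivity)
    intro hcontra
    apply this
    have := mul_eq_zero.mp (by rw [← hcontra] : -(z * σY ^ 2 / (σX ^ 2 + σY ^ 2)) * s = 0)
    rcases this with h | h
    · linarith [neg_eq_zero.mp h, h]
    · exact absurd h (ne_of_gt hs)
  refine ⟨hlt, ?_⟩
  have hle : ∀ z : ℝ, M z ≤ M 0 := by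
    intro z
    by_cases hz : z = 0
    · rw [hz]
    · exact le_of_lt (hlt z hz)
  have hsup : (⨆ z : ℝ, M z) = M 0 := by
    apply le_antisymm
    · exact ciSup_le hle
    · exact le_ciSup ⟨M 0, fun y ⟨z, hz⟩ => hz ▸ hle z⟩ 0
  rw [hsup, hM0, Phi_neg]
  have harg : Real.sqrt (1 + σX ^ 2 / σY ^ 2) * ε = a := by
    rw [ha_def, hs_def]
    have h1 : 1 + σX ^ 2 / σY ^ 2 = σX ^ 2 * (1 / σX ^ 2 + 1 / σY ^ 2) := by
      field_simp
    rw [h1, Real.sqrt_mul (sq_nonneg σX), Real.sqrt_sq hσX.le]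
    ring
  rw [harg]
  ring
end

section
/- (Explicit real form of the deconvolution kernel density estimator with Gamma noise.) Let 0 < ϑ ≤ 1, η > 0, b > 0, let K̃(s) = (1-s²)³𝟙_{[-1,1]}(s), let f̃_{ϑ,η}(t) = (1 + t²η²)^{-ϑ/2} cos(ϑ arctan(tη)), and let x, Z ∈ ℝ. Then (1/(2π)) ∫_{-∞}^{∞} e^{-itx} K̃(tb) e^{itZ} / f̃_{ϑ,η}(t) dt = (1/(ηπ)) ∫_0^{arctan(η/b)} cos(tan(θ)(x - Z)/η) · (1 - (b²/η²) tan²θ)³ / (cos^{ϑ+2}(θ) cos(ϑθ)) dθ; in particular, the left-hand side is real. -/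
open MeasureTheory

/-- The Fourier transform `K̃(s) = (1-s²)³ 𝟙_[-1,1](s)` of the deconvolution kernel. -/
noncomputable def Ktilde (s : ℝ) : ℝ := if |s| ≤ 1 then (1 - s ^ 2) ^ 3 else 0

lemma ktilde_cont : Continuous Ktilde := by
  apply Continuous.if_le (by continuity) continuous_const continuous_abs continuous_const
  intro s hs
  rw [← sq_abs s, hs]; norm_num

lemma ktilde_even (s : ℝ) : Ktilde (-s) = Ktilde s := by
  simp [Ktilde, abs_neg, neg_sq]

lemma even_interval (F : ℝ → ℝ) (hF : Continuous F) (a : ℝ)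
    (h : ∀ t, F (-t) = F t) : (∫ t in (-a)..a, F t) = 2 * ∫ t in (0:ℝ)..a, F t := by
  have h1 : (∫ t in (-a)..(0:ℝ), F t) = ∫ t in (0:ℝ)..a, F t := by
    rw [show (0:ℝ) = -(0:ℝ) by ring, ← intervalIntegral.integral_comp_neg]
    simp [h]
  rw [← intervalIntegral.integral_add_adjacent_intervals (b := (0:ℝ))
    (hF.intervalIntegrable _ _) (hF.intervalIntegrable _ _), h1]
  ring

lemma odd_interval (F : ℝ → ℝ) (hF : Continuous F) (a : ℝ)
    (h : ∀ t, F (-t) = -F t) : (∫ t in (-a)..a, F t) = 0 := by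
  have h1 : (∫ t in (-a)..(0:ℝ), F t) = -∫ t in (0:ℝ)..a, F t := by
    rw [show (0:ℝ) = -(0:ℝ) by ring, ← intervalIntegral.integral_comp_neg]
    simp [h, intervalIntegral.integral_neg]
  rw [← intervalIntegral.integral_add_adjacent_intervals (b := (0:ℝ))
    (hF.intervalIntegrable _ _) (hF.intervalIntegrable _ _), h1]
  ring

/-- explicit real form of the deconvolution kernel density estimator with
Gamma noise: for `0 < ϑ ≤ 1`, `η > 0`, `b > 0`, with
`f̃_{ϑ,η}(t) = (1+t²η²)^{-ϑ/2} cos(ϑ arctan(tη))` and `x, Z` real,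
`(1/(2π)) ∫ e^{-itx} K̃(tb) e^{itZ}/f̃_{ϑ,η}(t) dt
  = (1/(ηπ)) ∫₀^{arctan(η/b)} cos(tanθ·(x-Z)/η)(1-(b²/η²)tan²θ)³/(cos^{ϑ+2}θ cos(ϑθ)) dθ`;
in particular the left-hand side is real. -/
theorem deconvolution_estimator_real_form (ϑ η b : ℝ) (h0 : 0 < ϑ) (h1 : ϑ ≤ 1)
    (hη : 0 < η) (hb : 0 < b) (ft : ℝ → ℝ)
    (hft : ∀ t : ℝ, ft t =
      (1 + t ^ 2 * η ^ 2) ^ (-(ϑ / 2)) * Real.cos (ϑ * Real.arctan (t * η)))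
    (x Z : ℝ) :
    ((1 / (2 * Real.pi) : ℝ) : ℂ) *
      (∫ t : ℝ, Complex.exp (-(Complex.I * t * x)) * (Ktilde (t * b) : ℂ) *
        Complex.exp (Complex.I * t * Z) / (ft t : ℂ)) =
    ((((1 / (η * Real.pi)) *
      ∫ θ in (0 : ℝ)..(Real.arctan (η / b)),
        Real.cos (Real.tan θ * (x - Z) / η) *
          (1 - b ^ 2 / η ^ 2 * Real.tan θ ^ 2) ^ 3 /
            (Real.cos θ ^ (ϑ + 2) * Real.cos (ϑ * θ)) : ℝ)) : ℂ) := by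
  have hπ : (0:ℝ) < Real.pi := Real.pi_pos
  set a : ℝ := Real.arctan (η / b) with ha_def
  have ha0 : 0 < a := by
    have := Real.arctan_strictMono (show (0:ℝ) < η / b by positivity)
    rwa [Real.arctan_zero] at this
  have haπ : a < Real.pi / 2 := Real.arctan_lt_pi_div_two _
  -- positivity and continuity of ft
  have ftpos : ∀ t : ℝ, 0 < ft t := by
    intro t
    rw [hft t]
    have h2 : 0 < Real.cos (ϑ * Real.arctan (t * η)) := by
      apply Real.cos_pos_of_mem_Ioo
      have h3 : |Real.arctan (t * η)| < Real.pi / 2 := by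
        rw [abs_lt]
        exact ⟨Real.neg_pi_div_two_lt_arctan _, Real.arctan_lt_pi_div_two _⟩
      have h4 : |ϑ * Real.arctan (t * η)| < Real.pi / 2 := by
        rw [abs_mul, abs_of_pos h0]
        calc ϑ * |Real.arctan (t * η)| ≤ 1 * |Real.arctan (t * η)| := by
              apply mul_le_mul_of_nonneg_right h1 (abs_nonneg _)
          _ = |Real.arctan (t * η)| := one_mul _
          _ < Real.pi / 2 := h3
      rw [abs_lt] at h4
      exact ⟨h4.1, h4.2⟩
    positivity
  have ftcont : Continuous ft := by
    have : ft = fun t : ℝ =>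
        (1 + t ^ 2 * η ^ 2) ^ (-(ϑ / 2)) * Real.cos (ϑ * Real.arctan (t * η)) :=
      funext hft
    rw [this]
    apply Continuous.mul
    · apply Continuous.rpow_const (by continuity)
      intro t; left; positivity
    · exact Real.continuous_cos.comp (continuous_const.mul
        (Real.continuous_arctan.comp (continuous_id.mul continuous_const)))
  have fteven : ∀ t : ℝ, ft (-t) = ft t := by
    intro t
    rw [hft, hft]
    rw [show (-t) * η = -(t * η) by ring, Real.arctan_neg, neg_sq,
      show ϑ * -Real.arctan (t * η) = -(ϑ * Real.arctan (t * η)) by ring, Real.cos_neg]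
  -- the real even/odd pieces
  set G : ℝ → ℝ := fun t => Ktilde (t * b) / ft t * Real.cos (t * (Z - x)) with hG_def
  set S : ℝ → ℝ := fun t => Ktilde (t * b) / ft t * Real.sin (t * (Z - x)) with hS_def
  have Gcont : Continuous G :=
    ((ktilde_cont.comp (continuous_id.mul continuous_const)).div ftcont
      (fun t => (ftpos t).ne')).mul (Real.continuous_cos.comp (by continuity))
  have Scont : Continuous S :=
    ((ktilde_cont.comp (continuous_id.mul continuous_const)).div ftcont
      (fun t => (ftpos t).ne')).mul (Real.continuous_sin.comp (by continuity))
  have Geven : ∀ t, G (-t) = G t := by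
    intro t
    simp only [hG_def]
    rw [show (-t) * b = -(t * b) by ring, ktilde_even, fteven,
      show (-t) * (Z - x) = -(t * (Z - x)) by ring, Real.cos_neg]
  have Sodd : ∀ t, S (-t) = -S t := by
    intro t
    simp only [hS_def]
    rw [show (-t) * b = -(t * b) by ring, ktilde_even, fteven,
      show (-t) * (Z - x) = -(t * (Z - x)) by ring, Real.sin_neg]
    ring
  -- support of G and S
  have hzero : ∀ t : ℝ, t ∉ Set.Icc (-(1/b)) (1/b) → Ktilde (t * b) = 0 := by
    intro t ht
    have habs : 1 < |t * b| := by
      rw [Set.mem_Icc, not_and_or] at ht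
      rw [abs_mul, abs_of_pos hb]
      rcases ht with h | h
      · push_neg at h
        have : 1 / b < |t| := by
          rw [abs_of_nonpos (by nlinarith [one_div_pos.mpr hb])]
          linarith
        calc 1 = (1 / b) * b := by field_simp
          _ < |t| * b := by apply mul_lt_mul_of_pos_right this hb
      · push_neg at h
        have : 1 / b < |t| := lt_of_lt_of_le h (le_abs_self t)
        calc 1 = (1 / b) * b := by field_simp
          _ < |t| * b := by apply mul_lt_mul_of_pos_right this hb
    rw [Ktilde, if_neg (not_le.mpr habs)]
  have hGsupp : HasCompactSupport G :=
    HasCompactSupport.intro isCompact_Icc (fun t ht => by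
      simp only [hG_def]; rw [hzero t ht]; ring)
  have hSsupp : HasCompactSupport S :=
    HasCompactSupport.intro isCompact_Icc (fun t ht => by
      simp only [hS_def]; rw [hzero t ht]; ring)
  have hGint : Integrable G := Gcont.integrable_of_hasCompactSupport hGsupp
  have hSint : Integrable S := Scont.integrable_of_hasCompactSupport hSsupp
  -- pointwise identity for the complex integrand
  have key : ∀ t : ℝ,
      Complex.exp (-(Complex.I * t * x)) * (Ktilde (t * b) : ℂ) *
        Complex.exp (Complex.I * t * Z) / (ft t : ℂ)
      = ((G t : ℝ) : ℂ) + ((S t : ℝ) : ℂ) * Complex.I := by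
    intro t
    have hexp : Complex.exp (-(Complex.I * t * x)) * Complex.exp (Complex.I * t * Z)
        = Complex.cos ((t * (Z - x) : ℝ) : ℂ) + Complex.sin ((t * (Z - x) : ℝ) : ℂ) * Complex.I := by
      rw [← Complex.exp_add,
        show -(Complex.I * (t:ℂ) * (x:ℂ)) + Complex.I * (t:ℂ) * (Z:ℂ)
          = ((t * (Z - x) : ℝ) : ℂ) * Complex.I by push_cast; ring,
        Complex.exp_mul_I]
    have hne : ((ft t : ℝ) : ℂ) ≠ 0 := Complex.ofReal_ne_zero.mpr (ftpos t).ne'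
    calc Complex.exp (-(Complex.I * t * x)) * (Ktilde (t * b) : ℂ) *
          Complex.exp (Complex.I * t * Z) / (ft t : ℂ)
        = (Ktilde (t * b) : ℂ) / (ft t : ℂ) *
          (Complex.exp (-(Complex.I * t * x)) * Complex.exp (Complex.I * t * Z)) := by ring
      _ = (Ktilde (t * b) : ℂ) / (ft t : ℂ) *
          (Complex.cos ((t * (Z - x) : ℝ) : ℂ) + Complex.sin ((t * (Z - x) : ℝ) : ℂ) * Complex.I) := by
          rw [hexp]
      _ = ((G t : ℝ) : ℂ) + ((S t : ℝ) : ℂ) * Complex.I := by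
          rw [← Complex.ofReal_cos, ← Complex.ofReal_sin]
          simp only [hG_def, hS_def]
          push_cast
          ring
  -- compute the complex integral
  have hint : (∫ t : ℝ, Complex.exp (-(Complex.I * t * x)) * (Ktilde (t * b) : ℂ) *
        Complex.exp (Complex.I * t * Z) / (ft t : ℂ))
      = ((∫ t : ℝ, G t : ℝ) : ℂ) := by
    calc (∫ t : ℝ, Complex.exp (-(Complex.I * t * x)) * (Ktilde (t * b) : ℂ) *
          Complex.exp (Complex.I * t * Z) / (ft t : ℂ))
        = ∫ t : ℝ, (((G t : ℝ) : ℂ) + ((S t : ℝ) : ℂ) * Complex.I) := by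
          exact integral_congr_ae (Filter.Eventually.of_forall key)
      _ = (∫ t : ℝ, ((G t : ℝ) : ℂ)) + ∫ t : ℝ, ((S t : ℝ) : ℂ) * Complex.I := by
          apply integral_add hGint.ofReal (hSint.ofReal.mul_const _)
      _ = ((∫ t : ℝ, G t : ℝ) : ℂ) + ((∫ t : ℝ, S t : ℝ) : ℂ) * Complex.I := by
          rw [integral_mul_const,
            show (∫ t : ℝ, ((G t : ℝ) : ℂ)) = ((∫ t : ℝ, G t : ℝ) : ℂ) from integral_ofReal,
            show (∫ t : ℝ, ((S t : ℝ) : ℂ)) = ((∫ t : ℝ, S t : ℝ) : ℂ) from integral_ofReal]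
      _ = ((∫ t : ℝ, G t : ℝ) : ℂ) := by
          have hS0 : (∫ t : ℝ, S t) = 0 := by
            have h1 : (∫ t : ℝ, S t) = ∫ t in Set.Icc (-(1/b)) (1/b), S t :=
              (setIntegral_eq_integral_of_forall_compl_eq_zero (fun t ht => by
                simp only [hS_def]; rw [hzero t ht]; ring)).symm
            have hle : -(1/b) ≤ (1/b : ℝ) := by
              have := one_div_pos.mpr hb; linarith
            have h2 : (∫ t in Set.Icc (-(1/b)) (1/b), S t)
                = ∫ t in (-(1/b))..(1/b), S t := by
              rw [intervalIntegral.integral_of_le hle]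
              exact integral_Icc_eq_integral_Ioc
            rw [h1, h2, odd_interval S Scont _ Sodd]
          rw [hS0]
          simp
  -- reduce the real integral to a half-line interval integral
  have hGhalf : (∫ t : ℝ, G t) = 2 * ∫ t in (0:ℝ)..(1/b), G t := by
    have h1 : (∫ t : ℝ, G t) = ∫ t in Set.Icc (-(1/b)) (1/b), G t :=
      (setIntegral_eq_integral_of_forall_compl_eq_zero (fun t ht => by
        simp only [hG_def]; rw [hzero t ht]; ring)).symm
    have hle : -(1/b) ≤ (1/b : ℝ) := by
      have := one_div_pos.mpr hb; linarith
    have h2 : (∫ t in Set.Icc (-(1/b)) (1/b), G t) = ∫ t in (-(1/b))..(1/b), G t := by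
      rw [intervalIntegral.integral_of_le hle]
      exact integral_Icc_eq_integral_Ioc
    rw [h1, h2, even_interval G Gcont _ Geven]
  -- the substitution t = tan θ / η
  have hsub : (∫ t in (0:ℝ)..(1/b), G t)
      = ∫ θ in (0:ℝ)..a, (1 / Real.cos θ ^ 2 / η) • G (Real.tan θ / η) := by
    have hIcc : Set.uIcc (0:ℝ) a = Set.Icc 0 a := Set.uIcc_of_le ha0.le
    have hcosne : ∀ θ ∈ Set.uIcc (0:ℝ) a, Real.cos θ ≠ 0 := by
      intro θ hθ
      rw [hIcc] at hθ
      exact (Real.cos_pos_of_mem_Ioo ⟨by linarith [hθ.1, hπ], by linarith [hθ.2]⟩).ne'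
    have hderiv : ∀ θ ∈ Set.uIcc (0:ℝ) a,
        HasDerivAt (fun θ => Real.tan θ / η) (1 / Real.cos θ ^ 2 / η) θ := by
      intro θ hθ
      exact (Real.hasDerivAt_tan (hcosne θ hθ)).div_const η
    have hcont' : ContinuousOn (fun θ => 1 / Real.cos θ ^ 2 / η) (Set.uIcc (0:ℝ) a) := by
      apply ContinuousOn.div_const
      apply ContinuousOn.div continuousOn_const
        (Real.continuous_cos.continuousOn.pow 2)
      intro θ hθ
      exact pow_ne_zero 2 (hcosne θ hθ)
    have := intervalIntegral.integral_comp_smul_deriv hderiv hcont' Gcont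
    rw [show Real.tan (0:ℝ) / η = 0 by simp [Real.tan_zero],
      show Real.tan a / η = 1/b by
        rw [ha_def, Real.tan_arctan]; field_simp] at this
    exact this.symm
  -- identify the transformed integrand with the stated one
  have hcongr : (∫ θ in (0:ℝ)..a, (1 / Real.cos θ ^ 2 / η) • G (Real.tan θ / η))
      = η⁻¹ * ∫ θ in (0:ℝ)..a,
          Real.cos (Real.tan θ * (x - Z) / η) *
            (1 - b ^ 2 / η ^ 2 * Real.tan θ ^ 2) ^ 3 /
              (Real.cos θ ^ (ϑ + 2) * Real.cos (ϑ * θ)) := by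
    rw [← intervalIntegral.integral_const_mul]
    apply intervalIntegral.integral_congr
    intro θ hθ
    rw [Set.uIcc_of_le ha0.le] at hθ
    obtain ⟨hθ0, hθa⟩ := hθ
    have hθ1 : -(Real.pi / 2) < θ := by linarith
    have hθ2 : θ < Real.pi / 2 := by linarith
    have hcos : 0 < Real.cos θ := Real.cos_pos_of_mem_Ioo ⟨hθ1, hθ2⟩
    have htan0 : 0 ≤ Real.tan θ :=
      Real.tan_nonneg_of_nonneg_of_le_pi_div_two hθ0 hθ2.le
    have htana : Real.tan θ ≤ η / b := by
      have := Real.strictMonoOn_tan.monotoneOn ⟨hθ1, hθ2⟩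
        ⟨by linarith [ha0], haπ⟩ hθa
      rwa [ha_def, Real.tan_arctan] at this
    -- simplify ft at tan θ / η
    have hmul : Real.tan θ / η * η = Real.tan θ := div_mul_cancel₀ _ hη.ne'
    have hsq : (Real.tan θ / η) ^ 2 * η ^ 2 = Real.tan θ ^ 2 := by
      field_simp
    have honeadd : 1 + Real.tan θ ^ 2 = (Real.cos θ ^ 2)⁻¹ := by
      rw [← Real.inv_one_add_tan_sq hcos.ne', inv_inv]
    have hrpow : ((Real.cos θ ^ 2)⁻¹) ^ (-(ϑ / 2)) = Real.cos θ ^ ϑ := by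
      rw [← Real.rpow_natCast (Real.cos θ) 2, ← Real.rpow_neg_one,
        ← Real.rpow_mul hcos.le, ← Real.rpow_mul hcos.le]
      congr 1
      push_cast
      ring
    have hft' : ft (Real.tan θ / η) = Real.cos θ ^ ϑ * Real.cos (ϑ * θ) := by
      rw [hft, hsq, honeadd, hrpow, hmul, Real.arctan_tan hθ1 hθ2]
    have habs : |Real.tan θ / η * b| ≤ 1 := by
      rw [abs_of_nonneg (by positivity)]
      rw [div_mul_eq_mul_div, div_le_one hη]
      calc Real.tan θ * b ≤ (η / b) * b := mul_le_mul_of_nonneg_right htana hb.le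
        _ = η := by field_simp
    have hK : Ktilde (Real.tan θ / η * b) = (1 - b ^ 2 / η ^ 2 * Real.tan θ ^ 2) ^ 3 := by
      rw [Ktilde, if_pos habs,
        show (Real.tan θ / η * b) ^ 2 = b ^ 2 / η ^ 2 * Real.tan θ ^ 2 by
          field_simp]
    have hcospow : Real.cos θ ^ (ϑ + 2) = Real.cos θ ^ ϑ * Real.cos θ ^ 2 := by
      rw [Real.rpow_add hcos, Real.rpow_two]
    have hcosarg : Real.cos (Real.tan θ / η * (Z - x))
        = Real.cos (Real.tan θ * (x - Z) / η) := by
      rw [show Real.tan θ / η * (Z - x) = -(Real.tan θ * (x - Z) / η) by ring,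
        Real.cos_neg]
    simp only [hG_def, smul_eq_mul]
    rw [hft', hK, hcosarg, hcospow]
    ring
  rw [hint, hGhalf, hsub, hcongr]
  rw [← Complex.ofReal_mul]
  congr 1
  ring
end
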